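/- Let V : ℝ → ℝ be a solution of V'' - 3V' = R(V) on ℝ with V < -1 everywhere, V(-∞) = -1 and V(+∞) = -∞, and set G(s) = Q(V(s)) < 0. Then for every ε ∈ (0, 1) there exists a constant C(ε) > 0 such that -C(ε)·e^{2(1-ε)s} < G(s) < 0 for all s ≤ 0, and moreover |G'(s)| ≤ C(ε)·e^{2(1-ε)s} for all s ≤ 0. -/

import Mathlib

/-!
Along the solution `V = G - e^G`, hence `W := V + 1 = -(e^G - 1 - G) ≈ -G²/2`, and the equation
reads `V'' - 3V' = -2(1 - e^G)² ≈ -2G² ≈ 4W`. Precisely, `4W ≤ -2(1 - e^G)²` everywhere, and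
`-2(1 - e^G)² ≤ l(l - 3)W` for any `l ∈ (3, 4)` once `G` is close to `0`, i.e. near `-∞`.
As `V'` and `W` are bounded at `-∞`, exponential integrating factors turn these into
`4W ≤ V' ≤ lW` near `-∞`, whence `e^{4s} ≲ |W| ≲ e^{ls}`. Then `|G| ≈ √|W| ≲ e^{ls/2}`,
`1 - e^G ≈ |G| ≳ e^{2s}`, and `G' = V' / (1 - e^G) ≲ e^{(l - 2)s}`; take `l = 4 - ε` and
use continuity on compact intervals.
-/

open Real Filter Set Topology Asymptotics

theorem nonneg_of_hasDerivAt_nonpos_of_eq_zero {f f' : ℝ → ℝ}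
    (hf : ∀ x ≤ 0, HasDerivAt f (f' x) x) (hf' : ∀ x < 0, f' x ≤ 0) (h0 : f 0 = 0) {x : ℝ}
    (hx : x ≤ 0) : 0 ≤ f x := by
  have hanti : AntitoneOn f (Iic 0) := by
    refine antitoneOn_of_hasDerivWithinAt_nonpos (convex_Iic 0) (f' := f')
      (fun y hy => (hf y hy).continuousAt.continuousWithinAt) (fun y hy => ?_) (fun y hy => ?_)
    · rw [interior_Iic] at hy
      exact (hf y (le_of_lt hy)).hasDerivWithinAt
    · rw [interior_Iic] at hy
      exact hf' y hy
  simpa [h0] using hanti hx self_mem_Iic hx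

theorem sq_one_sub_exp_le {g : ℝ} (hg : g ≤ 0) : (1 - exp g) ^ 2 ≤ 2 * (exp g - 1 - g) := by
  have key := nonneg_of_hasDerivAt_nonpos_of_eq_zero
    (f := fun x => 2 * (exp x - 1 - x) - (1 - exp x) ^ 2) (f' := fun x => -2 * (1 - exp x) ^ 2)
    (fun x _ => (((((hasDerivAt_exp x).sub_const 1).sub (hasDerivAt_id x)).const_mul 2).sub
      (((hasDerivAt_exp x).const_sub 1).pow 2)).congr_deriv
        (by simp only [Nat.cast_ofNat, Nat.add_one_sub_one, pow_one]; ring))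
    (fun x _ => by nlinarith) (by simp) hg
  linarith

theorem exp_sub_one_sub_le {g : ℝ} (hg : g ≤ 0) : exp g - 1 - g ≤ g ^ 2 / 2 := by
  have key := nonneg_of_hasDerivAt_nonpos_of_eq_zero
    (f := fun x => x ^ 2 / 2 - (exp x - 1 - x)) (f' := fun x => x + 1 - exp x)
    (fun x _ => (((hasDerivAt_pow 2 x).div_const 2).sub
      (((hasDerivAt_exp x).sub_const 1).sub (hasDerivAt_id x))).congr_deriv
        (by simp only [Nat.cast_ofNat, Nat.add_one_sub_one, pow_one]; ring))
    (fun x _ => by linarith [add_one_le_exp x]) (by simp) hg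
  linarith

theorem neg_mul_exp_le_one_sub_exp (g : ℝ) : -g * exp g ≤ 1 - exp g := by
  have h := mul_le_mul_of_nonneg_left (add_one_le_exp (-g)) (exp_pos g).le
  rw [← exp_add, add_neg_cancel, exp_zero] at h
  linarith

theorem mul_sq_le_sq_one_sub_exp {g : ℝ} (hg : g ≤ 0) :
    (1 + 2 * g) * g ^ 2 ≤ (1 - exp g) ^ 2 :=
  calc (1 + 2 * g) * g ^ 2 ≤ exp (2 * g) * g ^ 2 := by
        gcongr; linarith [add_one_le_exp (2 * g)]
    _ = (-g * exp g) ^ 2 := by rw [show 2 * g = g + g by ring, exp_add]; ring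
    _ ≤ (1 - exp g) ^ 2 := by
        gcongr
        · exact mul_nonneg (neg_nonneg.2 hg) (exp_pos g).le
        · exact neg_mul_exp_le_one_sub_exp g

theorem strictMonoOn_sub_exp : StrictMonoOn (fun y => y - exp y) (Iic 0) := by
  refine strictMonoOn_of_hasDerivWithinAt_pos (convex_Iic 0) (f' := fun y => 1 - exp y)
    (by fun_prop) (fun y _ => ((hasDerivAt_id y).sub (hasDerivAt_exp y)).hasDerivWithinAt)
    (fun y hy => ?_)
  rw [interior_Iic] at hy
  simpa using exp_lt_one_iff.2 hy

theorem sub_exp_lt_neg_one {y : ℝ} (hy : y < 0) : y - exp y < -1 := by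
  simpa using strictMonoOn_sub_exp (mem_Iic.2 hy.le) self_mem_Iic hy

theorem hasDerivAt_of_rightInverse_sub_exp {Q : ℝ → ℝ}
    (hQ : ∀ v, v < -1 → Q v < 0 ∧ Q v - exp (Q v) = v) {v : ℝ} (hv : v < -1) :
    HasDerivAt Q (1 - exp (Q v))⁻¹ v := by
  have hmono : MonotoneOn Q (Iio (-1)) := fun w hw u hu hwu => by
    rw [← strictMonoOn_sub_exp.le_iff_le (hQ w hw).1.le (hQ u hu).1.le]
    simpa only [(hQ w hw).2, (hQ u hu).2] using hwu
  have himage : Iio 0 ⊆ Q '' Iio (-1) := fun y (hy : y < 0) => by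
    have hlt := sub_exp_lt_neg_one hy
    refine ⟨y - exp y, hlt, strictMonoOn_sub_exp.injOn (hQ _ hlt).1.le hy.le ?_⟩
    simp only [(hQ _ hlt).2]
  have hcont : ContinuousAt Q v := continuousAt_of_monotoneOn_of_image_mem_nhds hmono
    (Iio_mem_nhds hv) (mem_of_superset (Iio_mem_nhds (hQ v hv).1) himage)
  refine HasDerivAt.of_local_left_inverse hcont ((hasDerivAt_id _).sub (hasDerivAt_exp _)) ?_ ?_
  · exact (sub_pos.2 (exp_lt_one_iff.2 (hQ v hv).1)).ne'
  · filter_upwards [Iio_mem_nhds hv] with w hw using (hQ w hw).2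

theorem monotoneOn_exp_mul_of_mul_le_deriv {u u' : ℝ → ℝ} {c a : ℝ}
    (hu : ∀ t ≤ a, HasDerivAt u (u' t) t) (h : ∀ t < a, c * u t ≤ u' t) :
    MonotoneOn (fun t => exp (-(c * t)) * u t) (Iic a) := by
  have hd : ∀ t ≤ a, HasDerivAt (fun t => exp (-(c * t)) * u t)
      (exp (-(c * t)) * (u' t - c * u t)) t := fun t ht =>
    (((hasDerivAt_id t).const_mul c).neg.exp.mul (hu t ht)).congr_deriv
      (by simp only [id_eq, Pi.neg_apply]; ring)
  refine monotoneOn_of_hasDerivWithinAt_nonneg (convex_Iic a)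
    (f' := fun t => exp (-(c * t)) * (u' t - c * u t))
    (fun t ht => (hd t ht).continuousAt.continuousWithinAt) (fun t ht => ?_) (fun t ht => ?_)
  all_goals rw [interior_Iic] at ht
  · exact (hd t (le_of_lt ht)).hasDerivWithinAt
  · exact mul_nonneg (exp_pos _).le (sub_nonneg.2 (h t ht))

theorem le_mul_exp_of_mul_le_deriv {u u' : ℝ → ℝ} {c a : ℝ}
    (hu : ∀ t ≤ a, HasDerivAt u (u' t) t) (h : ∀ t < a, c * u t ≤ u' t) {s : ℝ}
    (hs : s ≤ a) : u s ≤ u a * exp (c * (s - a)) :=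
  calc u s = exp (c * s) * (exp (-(c * s)) * u s) := by rw [← mul_assoc, ← exp_add]; simp
    _ ≤ exp (c * s) * (exp (-(c * a)) * u a) := mul_le_mul_of_nonneg_left
        (monotoneOn_exp_mul_of_mul_le_deriv hu h hs self_mem_Iic hs) (exp_pos _).le
    _ = u a * exp (c * (s - a)) := by rw [mul_sub, sub_eq_add_neg, exp_add]; ring

theorem nonneg_of_mul_le_deriv_of_isBigO_one {u u' : ℝ → ℝ} {c a : ℝ} (hc : c < 0)
    (hu : ∀ t ≤ a, HasDerivAt u (u' t) t) (h : ∀ t < a, c * u t ≤ u' t)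
    (hbdd : u =O[atBot] fun _ => (1 : ℝ)) {s : ℝ} (hs : s ≤ a) : 0 ≤ u s := by
  have hlim : Tendsto (fun t => exp (-(c * t)) * u t) atBot (𝓝 0) := by
    have hexp : Tendsto (fun t => exp (-(c * t))) atBot (𝓝 0) := tendsto_exp_atBot.comp <|
      (tendsto_id.const_mul_atBot (neg_pos.2 hc)).congr fun t => neg_mul c t
    exact ((isBigO_refl _ atBot).mul hbdd).trans_tendsto (by simpa using hexp)
  have hmono := monotoneOn_exp_mul_of_mul_le_deriv hu h
  have : 0 ≤ exp (-(c * s)) * u s := le_of_tendsto hlim <| by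
    filter_upwards [eventually_le_atBot s] with t ht using hmono (ht.trans hs) hs ht
  exact (mul_nonneg_iff_of_pos_left (exp_pos _)).1 this

theorem isBigO_principal_Iic_of_isBigO_atBot {f g : ℝ → ℝ} (hf : Continuous f)
    (hg : Continuous g) (hg0 : ∀ x, g x ≠ 0) (h : f =O[atBot] g) (b : ℝ) :
    f =O[𝓟 (Iic b)] g := by
  obtain ⟨c, hc⟩ := h.bound
  obtain ⟨a, ha⟩ := eventually_atBot.1 hc
  have hleft : f =O[𝓟 (Iic a)] g := isBigO_principal.2 ⟨c, ha⟩
  have hright : f =O[𝓟 (Icc a b)] g := by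
    have hf1 : f =O[𝓟 (Icc a b)] fun _ => (1 : ℝ) :=
      hf.continuousOn.isBigO_principal isCompact_Icc (by norm_num)
    have hg1 : (fun x => (g x)⁻¹) =O[𝓟 (Icc a b)] fun _ => (1 : ℝ) :=
      (hg.inv₀ hg0).continuousOn.isBigO_principal isCompact_Icc (by norm_num)
    have h1g := hg1.inv_rev (Eventually.of_forall fun x hx => absurd hx (inv_ne_zero (hg0 x)))
    simp only [inv_one, inv_inv] at h1g
    exact hf1.trans h1g
  refine (hleft.sup hright).mono ?_
  rw [sup_principal]
  exact principal_mono.2 fun x hx => (le_or_gt x a).imp id fun hax => ⟨hax.le, hx⟩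

theorem isBigO_exp_mul_atBot {r r' : ℝ} (h : r ≤ r') :
    (fun s => exp (r' * s)) =O[atBot] fun s => exp (r * s) := by
  refine isBigO_exp_comp_exp_comp.2 (isBoundedUnder_of_eventually_le (a := 0) ?_)
  filter_upwards [eventually_le_atBot 0] with s hs
  simp only [Pi.sub_apply, sub_nonpos]
  nlinarith

-- `V` solves `V'' - 3V' = R(V)` with `V < -1`, written through `G = Q ∘ V`: `V = G - e^G` and
-- `R(V) = -2(1 - e^G)²`.
structure IsSolution (V G : ℝ → ℝ) : Prop where
  G_neg : ∀ s, G s < 0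
  G_sub_exp : ∀ s, G s - exp (G s) = V s
  hasDerivAt : ∀ s, HasDerivAt V (deriv V s) s
  hasDerivAt_deriv : ∀ s, HasDerivAt (deriv V) (3 * deriv V s - 2 * (1 - exp (G s)) ^ 2) s
  hasDerivAt_G : ∀ s, HasDerivAt G ((1 - exp (G s))⁻¹ * deriv V s) s
  tendsto_atBot : Tendsto V atBot (𝓝 (-1))

namespace IsSolution

variable {V G : ℝ → ℝ}

theorem of_ode {Q R : ℝ → ℝ} (hQ : ∀ v, v < -1 → Q v < 0 ∧ Q v - exp (Q v) = v)
    (hR : ∀ v, R v = if v < -1 then -2 * (1 - exp (Q v)) ^ 2 else 4 * (v + 1))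
    (hdiff : ∀ s, DifferentiableAt ℝ V s ∧ DifferentiableAt ℝ (deriv V) s)
    (hode : ∀ s, deriv (deriv V) s - 3 * deriv V s = R (V s)) (hlt : ∀ s, V s < -1)
    (hbot : Tendsto V atBot (𝓝 (-1))) (hG : ∀ s, G s = Q (V s)) : IsSolution V G where
  G_neg s := hG s ▸ (hQ _ (hlt s)).1
  G_sub_exp s := hG s ▸ (hQ _ (hlt s)).2
  hasDerivAt s := (hdiff s).1.hasDerivAt
  hasDerivAt_deriv s := by
    have := hode s
    rw [hR, if_pos (hlt s), ← hG] at this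
    exact (hdiff s).2.hasDerivAt.congr_deriv (by linarith)
  hasDerivAt_G s := by
    rw [show G = Q ∘ V from funext hG]
    exact (hasDerivAt_of_rightInverse_sub_exp hQ (hlt s)).comp s (hdiff s).1.hasDerivAt
  tendsto_atBot := hbot

theorem add_one_eq (h : IsSolution V G) (s : ℝ) : V s + 1 = -(exp (G s) - 1 - G s) := by
  linarith [h.G_sub_exp s]

theorem add_one_neg (h : IsSolution V G) (s : ℝ) : V s + 1 < 0 := by
  linarith [h.add_one_eq s, add_one_lt_exp (h.G_neg s).ne]

theorem add_one_isBigO_one (h : IsSolution V G) : (fun s => V s + 1) =O[atBot] fun _ => (1 : ℝ) :=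
  (h.tendsto_atBot.add_const 1).isBigO_one ℝ

theorem deriv_isBigO_one (h : IsSolution V G) : deriv V =O[atBot] fun _ => (1 : ℝ) := by
  have hF : ∀ s, 0 ≤ 2 * (1 - exp (G s)) ^ 2 ∧ 2 * (1 - exp (G s)) ^ 2 ≤ 2 := fun s => by
    have := exp_pos (G s)
    have := exp_lt_one_iff.2 (h.G_neg s)
    constructor <;> nlinarith
  refine IsBigO.of_bound (|deriv V 0| + 2 / 3) ?_
  filter_upwards [eventually_le_atBot 0] with s hs
  have h1 := le_mul_exp_of_mul_le_deriv (u := fun t => -deriv V t) (c := 3)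
    (fun t _ => (h.hasDerivAt_deriv t).neg) (fun t _ => by linarith [hF t]) hs
  have h2 := le_mul_exp_of_mul_le_deriv (u := fun t => deriv V t - 2 / 3) (c := 3)
    (fun t _ => (h.hasDerivAt_deriv t).sub_const _) (fun t _ => by linarith [hF t]) hs
  have he0 := exp_pos (3 * (s - 0))
  have he1 : exp (3 * (s - 0)) ≤ 1 := exp_le_one_iff.2 (by linarith)
  rw [norm_one, mul_one, norm_eq_abs, abs_le]
  rcases abs_cases (deriv V 0) with ⟨h0, _⟩ | ⟨h0, _⟩ <;> rw [h0] <;> constructor <;>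
    nlinarith

theorem four_mul_add_one_le_deriv (h : IsSolution V G) (s : ℝ) : 4 * (V s + 1) ≤ deriv V s := by
  have := nonneg_of_mul_le_deriv_of_isBigO_one (u := fun t => deriv V t - 4 * (V t + 1))
    (c := -1) (a := s) (by norm_num)
    (fun t _ => (h.hasDerivAt_deriv t).sub (((h.hasDerivAt t).add_const 1).const_mul 4))
    (fun t _ => by nlinarith [sq_one_sub_exp_le (h.G_neg t).le, h.add_one_eq t])
    (h.deriv_isBigO_one.sub (h.add_one_isBigO_one.const_mul_left 4)) le_rfl
  linarith

theorem exp_isBigO_add_one (h : IsSolution V G) :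
    (fun s => exp (4 * s)) =O[atBot] fun s => V s + 1 := by
  refine IsBigO.of_bound (-(V 0 + 1))⁻¹ ?_
  filter_upwards [eventually_le_atBot 0] with s hs
  have hle := le_mul_exp_of_mul_le_deriv (u := fun t => V t + 1) (c := 4)
    (fun t _ => (h.hasDerivAt t).add_const 1) (fun t _ => h.four_mul_add_one_le_deriv t) hs
  have h0 := h.add_one_neg 0
  rw [norm_of_nonneg (exp_pos _).le, norm_of_nonpos (h.add_one_neg s).le, inv_mul_eq_div,
    le_div_iff₀ (by linarith)]
  simp only [sub_zero] at hle
  nlinarith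

theorem tendsto_G_atBot (h : IsSolution V G) : Tendsto G atBot (𝓝 0) := by
  refine tendsto_order.2 ⟨fun b hb => ?_, fun b hb => .of_forall fun s => (h.G_neg s).trans hb⟩
  filter_upwards [(tendsto_order.1 h.tendsto_atBot).1 _ (sub_exp_lt_neg_one hb)] with s hs
  exact (strictMonoOn_sub_exp.lt_iff_lt (mem_Iic.2 hb.le) (mem_Iic.2 (h.G_neg s).le)).1
    (by simpa only [h.G_sub_exp s] using hs)

theorem eventually_deriv_le_mul_add_one (h : IsSolution V G) {l : ℝ} (h3 : 3 < l) (h4 : l < 4) :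
    ∀ᶠ s in atBot, deriv V s ≤ l * (V s + 1) := by
  obtain ⟨a, ha⟩ := eventually_atBot.1
    ((tendsto_order.1 h.tendsto_G_atBot).1 ((l - 4) / 2) (by linarith))
  filter_upwards [eventually_le_atBot a] with s hs
  have := nonneg_of_mul_le_deriv_of_isBigO_one (u := fun t => l * (V t + 1) - deriv V t)
    (c := 3 - l) (a := a) (by linarith)
    (fun t _ => (((h.hasDerivAt t).add_const 1).const_mul l).sub (h.hasDerivAt_deriv t))
    (fun t ht => ?_) ((h.add_one_isBigO_one.const_mul_left l).sub h.deriv_isBigO_one) hs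
  · linarith
  -- For `u = lW - V'` one has `u' + (l - 3)u = l(l - 3)W + 2(1 - e^G)²`.
  have hg := ha t ht.le
  have hquad := exp_sub_one_sub_le (h.G_neg t).le
  have hsq := mul_sq_le_sq_one_sub_exp (h.G_neg t).le
  have hl : 0 ≤ l * (l - 3) := by nlinarith
  have key : l * (l - 3) * (exp (G t) - 1 - G t) ≤ 2 * (1 - exp (G t)) ^ 2 :=
    calc l * (l - 3) * (exp (G t) - 1 - G t) ≤ l * (l - 3) * (G t ^ 2 / 2) := by gcongr
      _ ≤ 2 * ((1 + 2 * G t) * G t ^ 2) := by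
          nlinarith [mul_nonneg (mul_nonneg (sub_pos.2 h3).le (sub_pos.2 h4).le) (sq_nonneg (G t)),
            mul_nonneg (sq_nonneg (G t)) (by linarith : 0 ≤ 1 + 2 * G t - (l - 3))]
      _ ≤ 2 * (1 - exp (G t)) ^ 2 := by linarith
  nlinarith [h.add_one_eq t]

theorem add_one_isBigO_exp (h : IsSolution V G) {l : ℝ} (h3 : 3 < l) (h4 : l < 4) :
    (fun s => V s + 1) =O[atBot] fun s => exp (l * s) := by
  obtain ⟨a, ha⟩ := eventually_atBot.1 (h.eventually_deriv_le_mul_add_one h3 h4)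
  refine IsBigO.of_bound (-(V a + 1) * exp (-(l * a))) ?_
  filter_upwards [eventually_le_atBot a] with s hs
  have hle := le_mul_exp_of_mul_le_deriv (u := fun t => -(V t + 1)) (c := l)
    (fun t _ => ((h.hasDerivAt t).add_const 1).neg) (fun t ht => by linarith [ha t ht.le]) hs
  rw [norm_of_nonpos (h.add_one_neg s).le, norm_of_nonneg (exp_pos _).le]
  calc -(V s + 1) ≤ -(V a + 1) * exp (l * (s - a)) := hle
    _ = -(V a + 1) * exp (-(l * a)) * exp (l * s) := by
        rw [mul_assoc, ← exp_add]; ring_nf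

theorem deriv_isBigO_exp (h : IsSolution V G) {l : ℝ} (h3 : 3 < l) (h4 : l < 4) :
    deriv V =O[atBot] fun s => exp (l * s) := by
  refine IsBigO.trans ?_ (h.add_one_isBigO_exp h3 h4)
  refine IsBigO.of_bound 4 ?_
  filter_upwards [h.eventually_deriv_le_mul_add_one h3 h4] with s hs
  have := h.add_one_neg s
  have := h.four_mul_add_one_le_deriv s
  rw [norm_of_nonpos (h.add_one_neg s).le, norm_of_nonpos (by nlinarith)]
  linarith

theorem sq_G_isBigO_add_one (h : IsSolution V G) :
    (fun s => G s ^ 2) =O[atBot] fun s => V s + 1 := by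
  refine IsBigO.of_bound 4 ?_
  filter_upwards [(tendsto_order.1 h.tendsto_G_atBot).1 (-1 / 4) (by norm_num)] with s hs
  have h1 := mul_sq_le_sq_one_sub_exp (h.G_neg s).le
  have h2 := sq_one_sub_exp_le (h.G_neg s).le
  rw [norm_of_nonneg (sq_nonneg _), norm_of_nonpos (h.add_one_neg s).le, h.add_one_eq s]
  nlinarith [sq_nonneg (G s)]

theorem add_one_isBigO_sq_G (h : IsSolution V G) :
    (fun s => V s + 1) =O[atBot] fun s => G s ^ 2 := by
  refine IsBigO.of_bound (1 / 2) (.of_forall fun s => ?_)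
  rw [norm_of_nonpos (h.add_one_neg s).le, norm_of_nonneg (sq_nonneg _), h.add_one_eq s]
  linarith [exp_sub_one_sub_le (h.G_neg s).le]

theorem sq_G_isBigO_sq_one_sub_exp (h : IsSolution V G) :
    (fun s => G s ^ 2) =O[atBot] fun s => (1 - exp (G s)) ^ 2 := by
  refine IsBigO.of_bound 2 ?_
  filter_upwards [(tendsto_order.1 h.tendsto_G_atBot).1 (-1 / 4) (by norm_num)] with s hs
  have := mul_sq_le_sq_one_sub_exp (h.G_neg s).le
  rw [norm_of_nonneg (sq_nonneg _), norm_of_nonneg (sq_nonneg _)]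
  nlinarith [sq_nonneg (G s)]

theorem G_isBigO_exp (h : IsSolution V G) {l : ℝ} (h3 : 3 < l) (h4 : l < 4) :
    G =O[atBot] fun s => exp (l / 2 * s) := by
  refine IsBigO.of_pow two_ne_zero ?_
  refine (h.sq_G_isBigO_add_one.trans (h.add_one_isBigO_exp h3 h4)).congr_right fun s => ?_
  rw [Pi.pow_apply, ← exp_nat_mul]; ring_nf

theorem inv_one_sub_exp_isBigO (h : IsSolution V G) :
    (fun s => (1 - exp (G s))⁻¹) =O[atBot] fun s => exp (-2 * s) := by
  have hsq : ((fun s => exp (2 * s)) ^ 2) =O[atBot] ((fun s => 1 - exp (G s)) ^ 2) := by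
    refine IsBigO.trans ?_ (h.add_one_isBigO_sq_G.trans h.sq_G_isBigO_sq_one_sub_exp)
    refine h.exp_isBigO_add_one.congr_left fun s => ?_
    rw [Pi.pow_apply, ← exp_nat_mul]; ring_nf
  have := (IsBigO.of_pow two_ne_zero hsq).inv_rev (.of_forall fun s hs => absurd hs (exp_pos _).ne')
  simpa only [← exp_neg, neg_mul] using this

theorem continuous_G (h : IsSolution V G) : Continuous G :=
  continuous_iff_continuousAt.2 fun s => (h.hasDerivAt_G s).continuousAt

theorem deriv_G_eq (h : IsSolution V G) : deriv G = fun s => (1 - exp (G s))⁻¹ * deriv V s :=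
  funext fun s => (h.hasDerivAt_G s).deriv

theorem continuous_deriv_G (h : IsSolution V G) : Continuous (deriv G) := by
  rw [h.deriv_G_eq]
  refine ((continuous_const.sub (continuous_exp.comp h.continuous_G)).inv₀ fun s => ?_).mul
    (continuous_iff_continuousAt.2 fun s => (h.hasDerivAt_deriv s).continuousAt)
  exact (sub_pos.2 (exp_lt_one_iff.2 (h.G_neg s))).ne'

theorem deriv_G_isBigO_exp (h : IsSolution V G) {l : ℝ} (h3 : 3 < l) (h4 : l < 4) :
    deriv G =O[atBot] fun s => exp ((l - 2) * s) := by
  rw [h.deriv_G_eq]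
  refine (h.inv_one_sub_exp_isBigO.mul (h.deriv_isBigO_exp h3 h4)).congr_right fun s => ?_
  rw [← exp_add]; ring_nf

end IsSolution

theorem G_asymptotics_at_minus_infinity_general
    (Q R : ℝ → ℝ)
    (hQ : ∀ v : ℝ, v < -1 → Q v < 0 ∧ Q v - Real.exp (Q v) = v)
    (hR : ∀ v : ℝ, R v = if v < -1 then -2 * (1 - Real.exp (Q v)) ^ 2 else 4 * (v + 1))
    (V : ℝ → ℝ)
    (hdiff : ∀ s : ℝ, DifferentiableAt ℝ V s ∧ DifferentiableAt ℝ (deriv V) s)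
    (hode : ∀ s : ℝ, deriv (deriv V) s - 3 * deriv V s = R (V s))
    (hlt : ∀ s : ℝ, V s < -1)
    (hbot : Tendsto V atBot (nhds (-1)))
    (G : ℝ → ℝ) (hG : ∀ s : ℝ, G s = Q (V s)) :
    ∀ ε : ℝ, 0 < ε → ε < 1 → ∃ C : ℝ, 0 < C ∧
      ∀ s : ℝ, s ≤ 0 →
        (-C * Real.exp (2 * (1 - ε) * s) < G s ∧ G s < 0) ∧
        |deriv G s| ≤ C * Real.exp (2 * (1 - ε) * s) := by
  intro ε hε0 hε1
  have hsol := IsSolution.of_ode hQ hR hdiff hode hlt hbot hG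
  have hG_O : G =O[𝓟 (Iic 0)] fun s => exp (2 * (1 - ε) * s) :=
    isBigO_principal_Iic_of_isBigO_atBot hsol.continuous_G (by fun_prop) (fun s => (exp_pos _).ne')
      ((hsol.G_isBigO_exp (l := 4 - ε) (by linarith) (by linarith)).trans
        (isBigO_exp_mul_atBot (by linarith))) 0
  have hdG_O : deriv G =O[𝓟 (Iic 0)] fun s => exp (2 * (1 - ε) * s) :=
    isBigO_principal_Iic_of_isBigO_atBot hsol.continuous_deriv_G (by fun_prop)
      (fun s => (exp_pos _).ne') ((hsol.deriv_G_isBigO_exp (l := 4 - ε) (by linarith)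
        (by linarith)).trans (isBigO_exp_mul_atBot (by linarith))) 0
  obtain ⟨C₁, hC₁, hG_le⟩ := hG_O.exists_pos
  obtain ⟨C₂, hC₂, hdG_le⟩ := hdG_O.exists_pos
  rw [isBigOWith_principal] at hG_le hdG_le
  refine ⟨C₁ + C₂, by positivity, fun s hs => ⟨⟨?_, hsol.G_neg s⟩, ?_⟩⟩
  · have := hG_le s hs
    rw [norm_eq_abs, norm_of_nonneg (exp_pos _).le] at this
    nlinarith [neg_abs_le (G s), exp_pos (2 * (1 - ε) * s)]
  · have := hdG_le s hs
    rw [norm_eq_abs, norm_of_nonneg (exp_pos _).le] at this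
    nlinarith [exp_pos (2 * (1 - ε) * s)]

/-- Asymptotics of `G = Q ∘ V` at `s = -∞`: if `V` solves `V'' - 3V' = R(V)`
on `ℝ` with `V < -1` everywhere, `V(-∞) = -1`, `V(+∞) = -∞`, and
`G(s) = Q(V(s)) < 0`, then for every `ε ∈ (0,1)` there is `C(ε) > 0` with
`-C(ε) e^{2(1-ε)s} < G(s) < 0` and `|G'(s)| ≤ C(ε) e^{2(1-ε)s}` for all `s ≤ 0`. -/
theorem G_asymptotics_at_minus_infinity
    (Q R : ℝ → ℝ)
    (hQ : ∀ v : ℝ, v < -1 → Q v < 0 ∧ Q v - Real.exp (Q v) = v)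
    (hR : ∀ v : ℝ, R v = if v < -1 then -2 * (1 - Real.exp (Q v)) ^ 2 else 4 * (v + 1))
    (V : ℝ → ℝ)
    (hdiff : ∀ s : ℝ, DifferentiableAt ℝ V s ∧ DifferentiableAt ℝ (deriv V) s)
    (hode : ∀ s : ℝ, deriv (deriv V) s - 3 * deriv V s = R (V s))
    (hlt : ∀ s : ℝ, V s < -1)
    (hbot : Tendsto V atBot (nhds (-1)))
    (htop : Tendsto V atTop atBot)
    (G : ℝ → ℝ) (hG : ∀ s : ℝ, G s = Q (V s)) :
    ∀ ε : ℝ, 0 < ε → ε < 1 → ∃ C : ℝ, 0 < C ∧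
      ∀ s : ℝ, s ≤ 0 →
        (-C * Real.exp (2 * (1 - ε) * s) < G s ∧ G s < 0) ∧
        |deriv G s| ≤ C * Real.exp (2 * (1 - ε) * s) :=
  G_asymptotics_at_minus_infinity_general Q R hQ hR V hdiff hode hlt hbot G hG
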